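/- Let (A, Δ_A) be a coalgebra, E a vector space containing A as a subspace with a coalgebra structure (E, Δ_E) such that A is a subcoalgebra of E (i.e. Δ_E(a) = Δ_A(a) ∈ A⊗A for a ∈ A). Let p: E→A be a projection with p|_A = id and V = ker(p), π = id − p. Define ρ(x) = (p⊗π)Δ_E(x), γ(x) = (π⊗p)Δ_E(x), Δ_V(x) = (π⊗π)Δ_E(x), Q(x) = (p⊗p)Δ_E(x) for x ∈ V. Then the map φ: A # ^Q V → E, φ(a,x) = a + x, is a coalgebra isomorphism, where A # ^Q V has comultiplication Δ(a) = Δ_A(a) and Δ(x) = Δ_V(x) + ρ(x) + γ(x) + Q(x). -/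
import Mathlib


open TensorProduct BigOperators

section
variable {k A E : Type*} [Field k]
  [AddCommGroup A] [Module k A] [AddCommGroup E] [Module k E]

/-- The corestriction `π = id − i∘p : E → V = ker p`. -/
noncomputable def piV (i : A →ₗ[k] E) (p : E →ₗ[k] A) (hpi : ∀ a : A, p (i a) = a) :
    E →ₗ[k] LinearMap.ker p :=
  (LinearMap.id - i.comp p).codRestrict (LinearMap.ker p) (fun e => by
    simp [LinearMap.mem_ker, hpi])

/-- The comultiplication of `A # ^Q V`, built from the data
`ρ = (p⊗π)Δ_E`, `γ = (π⊗p)Δ_E`, `Δ_V = (π⊗π)Δ_E`, `Q = (p⊗p)Δ_E` on `V`, and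
`Δ(a) = Δ_A(a)` on `A`. -/
noncomputable def extComul (i : A →ₗ[k] E) (p : E →ₗ[k] A)
    (hpi : ∀ a : A, p (i a) = a)
    (dA : A →ₗ[k] A ⊗[k] A) (dE : E →ₗ[k] E ⊗[k] E) :
    (A × LinearMap.ker p) →ₗ[k]
      (A × LinearMap.ker p) ⊗[k] (A × LinearMap.ker p) :=
  let V := LinearMap.ker p
  let π : E →ₗ[k] V := piV i p hpi
  let ι : V →ₗ[k] E := V.subtype
  -- Δ(a) = Δ_A(a)
  (TensorProduct.map (LinearMap.inl k A V) (LinearMap.inl k A V)).comp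
      (dA.comp (LinearMap.fst k A V))
  -- Δ(x) = Δ_V(x) + ρ(x) + γ(x) + Q(x)
  + (TensorProduct.map (LinearMap.inr k A V) (LinearMap.inr k A V)).comp
      ((TensorProduct.map π π).comp (dE.comp (ι.comp (LinearMap.snd k A V))))
  + (TensorProduct.map (LinearMap.inl k A V) (LinearMap.inr k A V)).comp
      ((TensorProduct.map p π).comp (dE.comp (ι.comp (LinearMap.snd k A V))))
  + (TensorProduct.map (LinearMap.inr k A V) (LinearMap.inl k A V)).comp
      ((TensorProduct.map π p).comp (dE.comp (ι.comp (LinearMap.snd k A V))))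
  + (TensorProduct.map (LinearMap.inl k A V) (LinearMap.inl k A V)).comp
      ((TensorProduct.map p p).comp (dE.comp (ι.comp (LinearMap.snd k A V))))

private lemma mapc {k : Type*} [Field k] {M₁ M₂ N₁ N₂ P₁ P₂ : Type*}
    [AddCommGroup M₁] [Module k M₁] [AddCommGroup M₂] [Module k M₂]
    [AddCommGroup N₁] [Module k N₁] [AddCommGroup N₂] [Module k N₂]
    [AddCommGroup P₁] [Module k P₁] [AddCommGroup P₂] [Module k P₂]
    (f : N₁ →ₗ[k] P₁) (g : N₂ →ₗ[k] P₂) (f' : M₁ →ₗ[k] N₁) (g' : M₂ →ₗ[k] N₂)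
    (t : M₁ ⊗[k] M₂) :
    TensorProduct.map f g (TensorProduct.map f' g' t)
      = TensorProduct.map (f.comp f') (g.comp g') t := by
  rw [← LinearMap.comp_apply, ← TensorProduct.map_comp]

/-- Let `(A, Δ_A)` be a subcoalgebra of `(E, Δ_E)` with projection `p` and
`V = ker p`.  Then `φ : A # ^Q V → E`, `φ(a,x) = a + x`, is a coalgebra
isomorphism onto `E`. -/
theorem stmt12 (i : A →ₗ[k] E) (p : E →ₗ[k] A)
    (hpi : ∀ a : A, p (i a) = a)
    (dA : A →ₗ[k] A ⊗[k] A) (dE : E →ₗ[k] E ⊗[k] E)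
    -- Δ_A and Δ_E are coassociative
    (hcoA : ∀ a : A, (TensorProduct.assoc k A A A) ((LinearMap.rTensor A dA) (dA a))
      = (LinearMap.lTensor A dA) (dA a))
    (hcoE : ∀ e : E, (TensorProduct.assoc k E E E) ((LinearMap.rTensor E dE) (dE e))
      = (LinearMap.lTensor E dE) (dE e))
    -- A is a subcoalgebra of E
    (hsub : ∀ a : A, dE (i a) = (TensorProduct.map i i) (dA a)) :
    Function.Bijective (LinearMap.coprod i (LinearMap.ker p).subtype)
    ∧ (∀ w : A × LinearMap.ker p,
        (TensorProduct.map (LinearMap.coprod i (LinearMap.ker p).subtype)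
            (LinearMap.coprod i (LinearMap.ker p).subtype))
          (extComul i p hpi dA dE w)
        = dE ((LinearMap.coprod i (LinearMap.ker p).subtype) w)) := by

  constructor
  · constructor
    · intro ⟨a, x⟩ ⟨b, y⟩ h
      simp only [LinearMap.coprod_apply, Submodule.subtype_apply] at h
      have hab : a = b := by
        have := congrArg p h
        simpa [hpi, (LinearMap.mem_ker.mp x.2), (LinearMap.mem_ker.mp y.2)] using this
      subst hab
      have hxy : (x : E) = y := add_left_cancel h
      exact Prod.ext rfl (Subtype.ext hxy)
    · intro e
      refine ⟨(p e, ⟨e - i (p e), by simp [LinearMap.mem_ker, hpi]⟩), ?_⟩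
      simp
  · rintro ⟨a, x⟩
    have hφinl : (LinearMap.coprod i (LinearMap.ker p).subtype).comp
        (LinearMap.inl k A (LinearMap.ker p)) = i := LinearMap.coprod_inl _ _
    have hφinr : (LinearMap.coprod i (LinearMap.ker p).subtype).comp
        (LinearMap.inr k A (LinearMap.ker p)) = (LinearMap.ker p).subtype :=
      LinearMap.coprod_inr _ _
    have key : (LinearMap.ker p).subtype.comp (piV i p hpi) + i.comp p = LinearMap.id := by
      ext e
      simp [piV, sub_add_cancel]
    simp only [extComul, LinearMap.add_apply, LinearMap.comp_apply, map_add,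
      LinearMap.fst_apply, LinearMap.snd_apply, Submodule.subtype_apply, mapc, ← LinearMap.comp_assoc,
      hφinl, hφinr]
    have h1 : TensorProduct.map i i (dA a) = dE (i a) := (hsub a).symm
    rw [h1]
    have h2 : TensorProduct.map ((LinearMap.ker p).subtype.comp (piV i p hpi))
          ((LinearMap.ker p).subtype.comp (piV i p hpi)) (dE x)
        + TensorProduct.map (i.comp p)
          ((LinearMap.ker p).subtype.comp (piV i p hpi)) (dE x)
        + TensorProduct.map ((LinearMap.ker p).subtype.comp (piV i p hpi))
          (i.comp p) (dE x)
        + TensorProduct.map (i.comp p) (i.comp p) (dE x) = dE x := by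
      have e1 : TensorProduct.map ((LinearMap.ker p).subtype.comp (piV i p hpi))
            ((LinearMap.ker p).subtype.comp (piV i p hpi))
          + TensorProduct.map (i.comp p) ((LinearMap.ker p).subtype.comp (piV i p hpi))
          + TensorProduct.map ((LinearMap.ker p).subtype.comp (piV i p hpi)) (i.comp p)
          + TensorProduct.map (i.comp p) (i.comp p)
          = (LinearMap.id : E ⊗[k] E →ₗ[k] E ⊗[k] E) := by
        rw [show (TensorProduct.map ((LinearMap.ker p).subtype.comp (piV i p hpi))
              ((LinearMap.ker p).subtype.comp (piV i p hpi))
            + TensorProduct.map (i.comp p) ((LinearMap.ker p).subtype.comp (piV i p hpi))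
            + TensorProduct.map ((LinearMap.ker p).subtype.comp (piV i p hpi)) (i.comp p)
            + TensorProduct.map (i.comp p) (i.comp p))
            = TensorProduct.map ((LinearMap.ker p).subtype.comp (piV i p hpi) + i.comp p)
                ((LinearMap.ker p).subtype.comp (piV i p hpi) + i.comp p) by
          rw [TensorProduct.map_add_left, TensorProduct.map_add_right,
            TensorProduct.map_add_right]
          abel]
        rw [key, TensorProduct.map_id]
      calc _ = (TensorProduct.map ((LinearMap.ker p).subtype.comp (piV i p hpi))
            ((LinearMap.ker p).subtype.comp (piV i p hpi))
          + TensorProduct.map (i.comp p) ((LinearMap.ker p).subtype.comp (piV i p hpi))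
          + TensorProduct.map ((LinearMap.ker p).subtype.comp (piV i p hpi)) (i.comp p)
          + TensorProduct.map (i.comp p) (i.comp p)) (dE x) := by
            simp [LinearMap.add_apply]
        _ = dE x := by rw [e1]; rfl
    have h3 : dE ((LinearMap.coprod i (LinearMap.ker p).subtype) (a, x)) = dE (i a) + dE x := by
      simp [LinearMap.coprod_apply]
    rw [h3]
    linear_combination (norm := abel) h2

end
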